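/- Let I be a finite nonempty set and Tw(I) the category whose objects are diagrams I ↠ J ↠ K of surjections of finite nonempty sets, with morphisms from (I → J₁ → K₁) to (I → J₂ → K₂) given by a surjection J₁ → J₂ under I and a surjection K₂ → K₁ such that the composite J₁ → J₂ → K₂ → K₁ equals J₁ → K₁. Let ⁰Tw(I) ⊆ Tw(I) be the full subcategory of objects (I →ᵖ J → K) where p is a bijection. Then the inclusion j : ⁰Tw(I) → Tw(I) admits a right adjoint j^R sending (I →ᵖ J →ᑫ K) to (I →^{id} I →^{q∘p} K). -/

import Mathlib

open CategoryTheory Function Limits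

/-- An object of the category `Tw(I)`: a diagram `I ↠ J ↠ K` of surjections of
finite nonempty sets. -/
structure TwObj (I : Type) : Type 1 where
  J : Type
  K : Type
  jFin : Finite J
  kFin : Finite K
  jNe : Nonempty J
  kNe : Nonempty K
  p : I → J
  q : J → K
  hp : Function.Surjective p
  hq : Function.Surjective q

/-- A morphism in `Tw(I)` from `(I → J₁ → K₁)` to `(I → J₂ → K₂)`: a surjection
`J₁ → J₂` under `I` together with a surjection `K₂ → K₁` such that the composite
`J₁ → J₂ → K₂ → K₁` equals `J₁ → K₁`. -/
structure TwHom {I : Type} (A B : TwObj I) : Type where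
  φ : A.J → B.J
  ψ : B.K → A.K
  hφ : Function.Surjective φ
  hψ : Function.Surjective ψ
  hp : ∀ i, φ (A.p i) = B.p i
  hq : ∀ j, ψ (B.q (φ j)) = A.q j

theorem TwHom.ext' {I : Type} {A B : TwObj I} :
    ∀ {f g : TwHom A B}, f.φ = g.φ → f.ψ = g.ψ → f = g
  | ⟨_, _, _, _, _, _⟩, ⟨_, _, _, _, _, _⟩, rfl, rfl => rfl

instance twCategory (I : Type) : Category (TwObj I) where
  Hom A B := TwHom A B
  id A := ⟨_root_.id, _root_.id, Function.surjective_id, Function.surjective_id,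
    fun _ => rfl, fun _ => rfl⟩
  comp := fun f g => ⟨g.φ ∘ f.φ, f.ψ ∘ g.ψ, g.hφ.comp f.hφ, f.hψ.comp g.hψ,
    fun i => by simp only [Function.comp_apply, f.hp, g.hp],
    fun j => by simp only [Function.comp_apply, g.hq, f.hq]⟩
  id_comp := fun f => TwHom.ext' rfl rfl
  comp_id := fun f => TwHom.ext' rfl rfl
  assoc := fun f g h => TwHom.ext' rfl rfl

/-!
A morphism `A ⟶ B` in `Tw(I)` is determined by its component `ψ : B.K → A.K`, because its
component `φ` is forced by `φ ∘ A.p = B.p` and the surjectivity of `A.p`. Hence for `X` in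
`⁰Tw(I)` both `X ⟶ A` and `X ⟶ j^R A` amount to the surjections `ψ : A.K → X.K` with
`ψ ∘ A.q ∘ A.p ∘ X.p⁻¹ = X.q`, which gives the adjunction.
-/

namespace TwHom

variable {I : Type} {A B : TwObj I}

theorem φ_eq_comp_surjInv (f : TwHom A B) : f.φ = B.p ∘ surjInv A.hp := by
  funext j
  conv_lhs => rw [← surjInv_eq A.hp j]
  exact f.hp _

theorem ext_of_ψ {f g : TwHom A B} (h : f.ψ = g.ψ) : f = g :=
  ext' (f.φ_eq_comp_surjInv.trans g.φ_eq_comp_surjInv.symm) h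

end TwHom

/-- The full subcategory `⁰Tw(I)`. -/
abbrev ZeroTw (I : Type) : ObjectProperty (TwObj I) := fun A => Bijective A.p

namespace TwObj

variable {I : Type} [Finite I] [Nonempty I]

abbrev composite (A : TwObj I) : TwObj I :=
  { J := I, K := A.K, jFin := ‹Finite I›, kFin := A.kFin, jNe := ‹Nonempty I›,
    kNe := A.kNe, p := _root_.id, q := A.q ∘ A.p,
    hp := surjective_id, hq := A.hq.comp A.hp }

theorem composite_mem_zeroTw (A : TwObj I) : ZeroTw I A.composite := bijective_id

variable (I) in
/-- The right adjoint `j^R`. -/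
def compositeFunctor : TwObj I ⥤ (ZeroTw I).FullSubcategory where
  obj A := ⟨A.composite, A.composite_mem_zeroTw⟩
  map {A B} f := ObjectProperty.homMk (X := ⟨A.composite, _⟩) (Y := ⟨B.composite, _⟩)
    ⟨_root_.id, f.ψ, surjective_id, f.hψ, fun _ => rfl,
      fun i => by simpa only [comp_apply, id_eq, f.hp] using f.hq (A.p i)⟩
  map_id _ := ObjectProperty.hom_ext _ (TwHom.ext_of_ψ rfl)
  map_comp _ _ := ObjectProperty.hom_ext _ (TwHom.ext_of_ψ rfl)

noncomputable def homEquivComposite (X : (ZeroTw I).FullSubcategory) (A : TwObj I) :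
    (X.obj ⟶ A) ≃ (X ⟶ (compositeFunctor I).obj A) where
  toFun f := ObjectProperty.homMk (Y := ⟨A.composite, _⟩)
    ⟨surjInv X.obj.hp, f.ψ, (leftInverse_surjInv X.property).surjective, f.hψ,
      leftInverse_surjInv X.property,
      fun j => by simpa only [f.φ_eq_comp_surjInv, comp_apply] using f.hq j⟩
  invFun g := ⟨A.p ∘ g.hom.φ, g.hom.ψ, A.hp.comp g.hom.hφ, g.hom.hψ,
    fun i => congrArg A.p (g.hom.hp i), g.hom.hq⟩
  left_inv _ := TwHom.ext_of_ψ rfl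
  right_inv _ := ObjectProperty.hom_ext _ (TwHom.ext_of_ψ rfl)

variable (I) in
noncomputable def zeroTwιAdjunction : (ZeroTw I).ι ⊣ compositeFunctor I :=
  Adjunction.mkOfHomEquiv
    { homEquiv := homEquivComposite
      homEquiv_naturality_left_symm := fun _ _ => TwHom.ext_of_ψ rfl
      homEquiv_naturality_right := fun _ _ => ObjectProperty.hom_ext _ (TwHom.ext_of_ψ rfl) }

end TwObj

theorem stmt2 (I : Type) [Finite I] [Nonempty I] :
    ∃ R : TwObj I ⥤ ObjectProperty.FullSubcategory (fun A : TwObj I => Function.Bijective A.p),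
      Nonempty (ObjectProperty.ι (fun A : TwObj I => Function.Bijective A.p) ⊣ R) ∧
      ∀ A : TwObj I, (R.obj A).obj =
        { J := I, K := A.K, jFin := ‹Finite I›, kFin := A.kFin, jNe := ‹Nonempty I›,
          kNe := A.kNe, p := _root_.id, q := A.q ∘ A.p,
          hp := Function.surjective_id, hq := A.hq.comp A.hp } :=
  ⟨TwObj.compositeFunctor I, ⟨TwObj.zeroTwιAdjunction I⟩, fun _ => rfl⟩
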